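/- arXiv:1506.00177 — 3 statements merged into one kernel-verified Lean document; each statement's English description precedes it below -/
import Mathlib

section
/- Let P = (P* ⊣ P_*) be an adjunction with P*: 𝒞 → 𝒟 and P_*: 𝒟 → 𝒞, with unit η_P: id_𝒞 → P_*P*. If 𝒞 is idempotent complete and the unit η_P is a split monomorphism of functors, i.e. there exists a natural transformation ζ: P_*P* → id_𝒞 with ζ ∘ η_P = id, then the comparison functor Γ_P: 𝒞 → 𝒟_{𝕋(P)} to the category of comodules over the induced comonad 𝕋(P) is an equivalence of categories. -/
/-!
Write `e := R(a) ≫ ζ` for a coalgebra `a : A ⟶ LRA`. Since `ζ` splits the unit, a coalgebra morphism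
`g : LX ⟶ LY` is the image of `η_X ≫ R(g) ≫ ζ_Y` (fullness), and `L` is faithful because its unit
is monic. For essential surjectivity, coassociativity of `a` makes `e` an idempotent equalizing
`R(a)` and `η_{RA}`; if `i : Y ⟶ RA`, `p : RA ⟶ Y` split `e` in `C`, then the adjunct `Li ≫ ε_A`
of `i` is a coalgebra isomorphism `LY ≅ A` with inverse `a ≫ Lp`.
-/

open CategoryTheory

namespace CategoryTheory.Adjunction

variable {C D : Type*} [Category C] [Category D] {L : C ⥤ D} {R : D ⥤ C} (adj : L ⊣ R)
  {ζ : L ⋙ R ⟶ 𝟭 C}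

lemma unit_app_comp_app_of_unit_comp_eq_id (hζ : adj.unit ≫ ζ = 𝟙 (𝟭 C)) (X : C) :
    adj.unit.app X ≫ ζ.app X = 𝟙 X :=
  NatTrans.congr_app hζ X

lemma faithful_of_unit_comp_eq_id (hζ : adj.unit ≫ ζ = 𝟙 (𝟭 C)) : L.Faithful :=
  have (X : C) : IsSplitMono (adj.unit.app X) :=
    .mk' ⟨ζ.app X, adj.unit_app_comp_app_of_unit_comp_eq_id hζ X⟩
  adj.faithful_L_of_mono_unit_app

lemma map_unit_app_comp_map_comp_app {X Y : C} (hζ : adj.unit ≫ ζ = 𝟙 (𝟭 C))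
    {g : L.obj X ⟶ L.obj Y}
    (hg : L.map (adj.unit.app X) ≫ L.map (R.map g) = g ≫ L.map (adj.unit.app Y)) :
    L.map (adj.unit.app X ≫ R.map g ≫ ζ.app Y) = g := by
  rw [L.map_comp, L.map_comp, reassoc_of% hg, ← L.map_comp,
    adj.unit_app_comp_app_of_unit_comp_eq_id hζ, L.map_id, Category.comp_id]

lemma full_comparison_of_unit_comp_eq_id (hζ : adj.unit ≫ ζ = 𝟙 (𝟭 C)) :
    (Comonad.comparison adj).Full where
  map_surjective {X Y} f :=
    ⟨adj.unit.app X ≫ R.map f.f ≫ ζ.app Y,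
      Comonad.Coalgebra.Hom.ext (adj.map_unit_app_comp_map_comp_app hζ f.h)⟩

section Coassoc

variable {A : D} {a : A ⟶ L.obj (R.obj A)}

variable (ζ) in
lemma map_comp_app_comp_map_eq
    (ha : a ≫ L.map (R.map a) = a ≫ L.map (adj.unit.app (R.obj A))) :
    (R.map a ≫ ζ.app (R.obj A)) ≫ R.map a =
      (R.map a ≫ ζ.app (R.obj A)) ≫ adj.unit.app (R.obj A) := by
  have hζa : R.map (L.map (R.map a)) ≫ ζ.app (R.obj (L.obj (R.obj A))) =
      ζ.app (R.obj A) ≫ R.map a := ζ.naturality _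
  have hζη : R.map (L.map (adj.unit.app (R.obj A))) ≫ ζ.app (R.obj (L.obj (R.obj A))) =
      ζ.app (R.obj A) ≫ adj.unit.app (R.obj A) := ζ.naturality _
  rw [Category.assoc, ← hζa, ← R.map_comp_assoc, ha, R.map_comp_assoc, hζη, Category.assoc]

lemma map_comp_app_idem (hζ : adj.unit ≫ ζ = 𝟙 (𝟭 C))
    (ha : a ≫ L.map (R.map a) = a ≫ L.map (adj.unit.app (R.obj A))) :
    (R.map a ≫ ζ.app (R.obj A)) ≫ R.map a ≫ ζ.app (R.obj A) =
      R.map a ≫ ζ.app (R.obj A) := by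
  rw [← Category.assoc, adj.map_comp_app_comp_map_eq ζ ha, Category.assoc,
    adj.unit_app_comp_app_of_unit_comp_eq_id hζ]
  exact Category.comp_id _

lemma comp_map_map_comp_app_comp_counit (hζ : adj.unit ≫ ζ = 𝟙 (𝟭 C))
    (ha : a ≫ L.map (R.map a) = a ≫ L.map (adj.unit.app (R.obj A)))
    (ha' : a ≫ adj.counit.app A = 𝟙 A) :
    a ≫ L.map (R.map a ≫ ζ.app (R.obj A)) ≫ adj.counit.app A = 𝟙 A := by
  rw [L.map_comp, Category.assoc, reassoc_of% ha, ← L.map_comp_assoc,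
    adj.unit_app_comp_app_of_unit_comp_eq_id hζ, L.map_id, Category.id_comp, ha']

lemma map_comp_counit_comp_eq {Y : C} {i : Y ⟶ R.obj A}
    (hi : i ≫ R.map a = i ≫ adj.unit.app (R.obj A)) :
    L.map i ≫ adj.counit.app A ≫ a = L.map i := by
  have hε : L.map (R.map a) ≫ adj.counit.app _ = adj.counit.app A ≫ a :=
    adj.counit.naturality a
  rw [← hε, ← L.map_comp_assoc, hi, L.map_comp_assoc, adj.left_triangle_components,
    Category.comp_id]

lemma exists_iso_obj_of_coassoc [IsIdempotentComplete C] (hζ : adj.unit ≫ ζ = 𝟙 (𝟭 C))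
    (ha : a ≫ L.map (R.map a) = a ≫ L.map (adj.unit.app (R.obj A)))
    (ha' : a ≫ adj.counit.app A = 𝟙 A) :
    ∃ (Y : C) (e : L.obj Y ≅ A),
      L.map (adj.unit.app Y) ≫ L.map (R.map e.hom) = e.hom ≫ a := by
  obtain ⟨Y, i, p, hip, hpi⟩ :=
    IsIdempotentComplete.idempotents_split _ _ (adj.map_comp_app_idem hζ ha)
  have hie : i ≫ R.map a ≫ ζ.app (R.obj A) = i := by rw [← hpi, reassoc_of% hip]
  have hi : i ≫ R.map a = i ≫ adj.unit.app (R.obj A) := by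
    have := i ≫= adj.map_comp_app_comp_map_eq ζ ha
    rwa [← Category.assoc, hie, ← Category.assoc, hie] at this
  refine ⟨Y,
    { hom := L.map i ≫ adj.counit.app A
      inv := a ≫ L.map p
      hom_inv_id := by
        rw [Category.assoc, reassoc_of% (adj.map_comp_counit_comp_eq hi), ← L.map_comp, hip,
          L.map_id]
      inv_hom_id := by
        rw [Category.assoc, ← L.map_comp_assoc, hpi]
        exact adj.comp_map_map_comp_app_comp_counit hζ ha ha' }, ?_⟩
  change L.map (adj.unit.app Y) ≫ L.map (R.map (L.map i ≫ adj.counit.app A)) =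
    (L.map i ≫ adj.counit.app A) ≫ a
  rw [Category.assoc, adj.map_comp_counit_comp_eq hi, ← L.map_comp]
  simp

end Coassoc

lemma essSurj_comparison_of_unit_comp_eq_id [IsIdempotentComplete C]
    (hζ : adj.unit ≫ ζ = 𝟙 (𝟭 C)) : (Comonad.comparison adj).EssSurj where
  mem_essImage A := by
    have ha : A.a ≫ L.map (R.map A.a) = A.a ≫ L.map (adj.unit.app (R.obj A.A)) := by
      have := A.coassoc
      simp only [toComonad_δ, Functor.whiskerRight_app, Functor.whiskerLeft_app] at this
      exact this.symm
    have ha' : A.a ≫ adj.counit.app A.A = 𝟙 A.A := by simpa using A.counit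
    obtain ⟨Y, e, he⟩ := adj.exists_iso_obj_of_coassoc hζ ha ha'
    exact ⟨Y, ⟨Comonad.Coalgebra.isoMk e he⟩⟩

end CategoryTheory.Adjunction

/-- If the domain of the left adjoint is idempotent complete and the unit of the adjunction
`P* ⊣ P_*` is a split monomorphism of functors, then the comparison functor to the category
of comodules (coalgebras) over the induced comonad is an equivalence. -/
theorem comparison_isEquivalence_of_unit_split_mono
    {C D : Type*} [Category C] [Category D]
    (L : C ⥤ D) (R : D ⥤ C) (adj : L ⊣ R)
    (hidem : IsIdempotentComplete C)
    (hsplit : ∃ ζ : L ⋙ R ⟶ 𝟭 C, adj.unit ≫ ζ = 𝟙 (𝟭 C)) :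
    (Comonad.comparison adj).IsEquivalence := by
  obtain ⟨ζ, hζ⟩ := hsplit
  have := adj.faithful_of_unit_comp_eq_id hζ
  have := adj.full_comparison_of_unit_comp_eq_id hζ
  have := adj.essSurj_comparison_of_unit_comp_eq_id hζ
  exact { }
end

section
/- Let P = (P*: 𝒜′ → 𝒜 ⊣ P_*: 𝒜 → 𝒜′) and Q = (Q*: ℬ′ → ℬ ⊣ Q_*: ℬ → ℬ′) be adjunctions with units η_P, η_Q and counits ε_P, ε_Q, and let F: 𝒜 → ℬ, G: ℬ → 𝒜, F′: 𝒜′ → ℬ′, G′: ℬ′ → 𝒜′ be functors. Let 𝒞 ⊆ 𝒜, 𝒟 ⊆ ℬ, 𝒞′ ⊆ 𝒜′, 𝒟′ ⊆ ℬ′ be full subcategories such that F maps 𝒜 into 𝒟, G maps 𝒟 into 𝒞, P* maps 𝒞′ into 𝒞, Q* maps 𝒟′ into 𝒟, F′ maps 𝒞′ into 𝒟′, and G′ maps 𝒟′ into 𝒞′. Suppose given natural isomorphisms Ω_F*: F∘P* ≅ Q*∘F′, Ω_{F*}: F′∘P_* ≅ Q_*∘F, Ω_G*: G∘Q* ≅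 P*∘G′, Ω_{G*}: G′∘Q_* ≅ P_*∘G satisfying: ε_Q F ∘ Q*Ω_{F*} ∘ Ω_F*P_* = Fε_P; Q_*Ω_F* ∘ Ω_{F*}P* ∘ F′η_P = η_Q F′; ε_P G ∘ P*Ω_{G*} ∘ Ω_G*Q_* = Gε_Q; and P_*Ω_G* ∘ Ω_{G*}Q* ∘ G′η_Q = η_P G′. Set Ω_F := Q*Ω_{F*} ∘ Ω_F*P_* and Ω_G := P*Ω_{G*} ∘ Ω_G*Q_*. Assume that every component of η_P and of η_Q is a split monomorphism, and that there is a bijection Σ(D, A): Hom_ℬ(D, F(A)) ≅ Hom_𝒜(G(D), A) natural in D ∈ 𝒟 and A ∈ 𝒜; let ω: G∘F|_𝒞 → id_𝒞 denote the resulting adjunction counit of (G|_𝒟 ⊣ F|_𝒞). Then: (1) if F|_𝒞: 𝒞 → 𝒟 is fully faithful, so is F′|_{𝒞′}: 𝒞′ → 𝒟′; (2) if moreover F|_𝒞 and G′|_{𝒟′} are fully faithful and the diagram (⋆) commutes, namely P*P_*ωP* ∘ Ω_G F P* ∘ GΩ_F P* ∘ GFP*η_P = P*η_P ∘ ωP*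 as natural transformations G∘F∘P*|_{𝒞′} → P*∘P_*∘P*|_{𝒞′}, then F′|_{𝒞′}: 𝒞′ → 𝒟′ is an equivalence. -/
/-!
The units of `P` and `Q` are split monomorphisms, so `P*` and `Q*` are faithful and conservative,
and a morphism `a : P* X ⟶ P* Y` compatible with the coactions `P* η_P` of the comonad `P* P_*` is
`P*` of `η_P ≫ P_* a ≫ ζ`, where `ζ` is a retraction of `η_P`. The isomorphisms `Ω_F*`, `Ω_{F*}`
identify `F ∘ P* P_*` with `Q* Q_* ∘ F` compatibly with the units, so `F` transports coaction
compatibility from `Q* ψ` to its preimage `a` under `F`; this makes `F′|_𝒞′` full, and faithfulness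
is inherited directly. For essential surjectivity of `F′|_𝒞′`, the counit `ω` is invertible on `𝒞`,
`F|_𝒞` being a fully faithful right adjoint of `G|_𝒟`. Diagram `(⋆)` says precisely that the
isomorphism `P* G′ F′ X ≅ G Q* F′ X ≅ G F P* X ⟶ P* X` (the last map `ω`) is compatible with the
coactions, so it is `P*` of an isomorphism `G′ F′ X ≅ X`; for `X = G′ Y` the fully faithful `G′`
turns this into `F′ G′ Y ≅ Y`.
-/

open CategoryTheory

/-- Restriction of a functor to full subcategories. -/
def restrictFunctor {A B : Type*} [Category A] [Category B] (F : A ⥤ B)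
    (P : A → Prop) (Q : B → Prop) (h : ∀ a, P a → Q (F.obj a)) :
    ObjectProperty.FullSubcategory P ⥤ ObjectProperty.FullSubcategory Q :=
  ObjectProperty.lift Q (ObjectProperty.ι P ⋙ F) fun X => h X.obj X.property

namespace CategoryTheory.Adjunction

variable {C D : Type*} [Category C] [Category D] {L : C ⥤ D} {R : D ⥤ C}

section

variable (adj : L ⊣ R) [∀ X, IsSplitMono (adj.unit.app X)]

/- For `H = 𝟭 D`, `ha` says that `a` is a morphism of coalgebras over the comonad
`adj.toComonad` between `(Comonad.comparison adj).obj X` and `(Comonad.comparison adj).obj Y`. -/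
theorem exists_map_map_eq_of_map_comp {E : Type*} [Category E] (H : D ⥤ E) {X Y : C}
    {a : L.obj X ⟶ L.obj Y}
    (ha : H.map (L.map (adj.unit.app X) ≫ L.map (R.map a)) = H.map (a ≫ L.map (adj.unit.app Y))) :
    ∃ f : X ⟶ Y, H.map (L.map f) = H.map a :=
  ⟨adj.unit.app X ≫ R.map a ≫ retraction (adj.unit.app Y), by
    simp only [L.map_comp, H.map_comp] at ha ⊢
    rw [reassoc_of% ha, ← H.map_comp, ← L.map_comp, IsSplitMono.id, L.map_id, H.map_id,
      Category.comp_id]⟩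

theorem exists_map_eq_of_comp {X Y : C} {a : L.obj X ⟶ L.obj Y}
    (ha : L.map (adj.unit.app X) ≫ L.map (R.map a) = a ≫ L.map (adj.unit.app Y)) :
    ∃ f : X ⟶ Y, L.map f = a :=
  adj.exists_map_map_eq_of_map_comp (𝟭 D) ha

end

theorem reflectsIsomorphisms_of_isSplitMono_unit (adj : L ⊣ R)
    [∀ X, IsSplitMono (adj.unit.app X)] : L.ReflectsIsomorphisms where
  reflects {X Y} f _ := by
    have := adj.faithful_L_of_mono_unit_app
    obtain ⟨g, hg⟩ := adj.exists_map_eq_of_comp (a := inv (L.map f)) (by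
      have := congrArg L.map (adj.unit.naturality f)
      simp only [Functor.id_map, Functor.comp_map, L.map_comp] at this
      rw [← cancel_epi (L.map f), reassoc_of% this]
      simp)
    exact ⟨g, L.map_injective (by simp [hg]), L.map_injective (by simp [hg])⟩

end CategoryTheory.Adjunction

universe v₁ v₂ v₃ v₄

section restrictFunctor

variable {C D : Type*} [Category C] [Category D] (F : C ⥤ D) (P : C → Prop) (Q : D → Prop)
  (h : ∀ c, P c → Q (F.obj c))

theorem restrictFunctor_faithful_iff : (restrictFunctor F P Q h).Faithful ↔
    ∀ X Y, P X → P Y → Function.Injective (F.map : (X ⟶ Y) → _) := by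
  refine ⟨fun hF X Y hX hY f g hfg => ?_, fun hF => ⟨fun {X Y} f g hfg => ?_⟩⟩
  · have hinj := (restrictFunctor F P Q h).map_injective (X := ⟨X, hX⟩) (Y := ⟨Y, hY⟩)
    exact congrArg (·.hom) (@hinj (ObjectProperty.homMk f) (ObjectProperty.homMk g)
      (InducedCategory.hom_ext hfg))
  · exact InducedCategory.hom_ext (hF _ _ X.property Y.property (congrArg (·.hom) hfg))

theorem restrictFunctor_full_iff : (restrictFunctor F P Q h).Full ↔
    ∀ X Y, P X → P Y → Function.Surjective (F.map : (X ⟶ Y) → _) := by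
  refine ⟨fun hF X Y hX hY φ => ?_, fun hF => ⟨fun {X Y} φ => ?_⟩⟩
  · obtain ⟨f, hf⟩ := (restrictFunctor F P Q h).map_surjective
      (ObjectProperty.homMk φ :
        (restrictFunctor F P Q h).obj ⟨X, hX⟩ ⟶ (restrictFunctor F P Q h).obj ⟨Y, hY⟩)
    exact ⟨f.hom, congrArg (·.hom) hf⟩
  · obtain ⟨f, hf⟩ := hF _ _ X.property Y.property φ.hom
    exact ⟨ObjectProperty.homMk f, InducedCategory.hom_ext hf⟩

theorem restrictFunctor_full_and_faithful_iff :
    (restrictFunctor F P Q h).Full ∧ (restrictFunctor F P Q h).Faithful ↔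
      ∀ X Y, P X → P Y → Function.Bijective (F.map : (X ⟶ Y) → _) := by
  rw [restrictFunctor_full_iff, restrictFunctor_faithful_iff]
  exact ⟨fun H X Y hX hY => ⟨H.2 X Y hX hY, H.1 X Y hX hY⟩,
    fun H => ⟨fun X Y hX hY => (H X Y hX hY).2, fun X Y hX hY => (H X Y hX hY).1⟩⟩

end restrictFunctor

section PartialAdjunction

variable {A B : Type*} [Category.{v₁} A] [Category.{v₂} B] {F : A ⥤ B} {G : B ⥤ A}
  {PC : A → Prop} {PD : B → Prop}

def partialAdjunction (hFD : ∀ X, PD (F.obj X)) (hGC : ∀ D, PD D → PC (G.obj D))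
    (e : ∀ D, PD D → ∀ X, (D ⟶ F.obj X) ≃ (G.obj D ⟶ X))
    (hnat : ∀ (D D' : B) (hD : PD D) (hD' : PD D') (g : D' ⟶ D)
      (X X' : A) (a : X ⟶ X') (φ : D ⟶ F.obj X),
      e D' hD' X' (g ≫ φ ≫ F.map a) = G.map g ≫ e D hD X φ ≫ a) :
    restrictFunctor G PD PC hGC ⊣ restrictFunctor F PC PD fun X _ => hFD X :=
  Adjunction.mkOfHomEquiv
    { homEquiv := fun D X =>
        { toFun := fun f => ObjectProperty.homMk ((e D.obj D.property X.obj).symm f.hom)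
          invFun := fun φ => ObjectProperty.homMk (e D.obj D.property X.obj φ.hom)
          left_inv := fun f => InducedCategory.hom_ext ((e _ _ _).apply_symm_apply f.hom)
          right_inv := fun φ => InducedCategory.hom_ext ((e _ _ _).symm_apply_apply φ.hom) }
      homEquiv_naturality_left_symm := fun {D' D X} g φ => InducedCategory.hom_ext <| by
        have key (ψ : D.obj ⟶ F.obj X.obj) :
            e D'.obj D'.property X.obj (g.hom ≫ ψ) = G.map g.hom ≫ e D.obj D.property X.obj ψ := by
          simpa using hnat _ _ D.property D'.property g.hom X.obj X.obj (𝟙 _) ψ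
        exact key φ.hom
      homEquiv_naturality_right := fun {D X X'} f a => InducedCategory.hom_ext <| by
        have key (φ : G.obj D.obj ⟶ X.obj) : (e D.obj D.property X'.obj).symm (φ ≫ a.hom) =
            (e D.obj D.property X.obj).symm φ ≫ F.map a.hom := by
          rw [Equiv.symm_apply_eq]
          simpa using (hnat _ _ D.property D.property (𝟙 _) X.obj X'.obj a.hom
            ((e D.obj D.property X.obj).symm φ)).symm
        exact key f.hom }

theorem isIso_counit_app_of_full_of_faithful (hFD : ∀ X, PD (F.obj X))
    (hGC : ∀ D, PD D → PC (G.obj D))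
    (e : ∀ D, PD D → ∀ X, (D ⟶ F.obj X) ≃ (G.obj D ⟶ X))
    (hnat : ∀ (D D' : B) (hD : PD D) (hD' : PD D') (g : D' ⟶ D)
      (X X' : A) (a : X ⟶ X') (φ : D ⟶ F.obj X),
      e D' hD' X' (g ≫ φ ≫ F.map a) = G.map g ≫ e D hD X φ ≫ a)
    [(restrictFunctor F PC PD fun X _ => hFD X).Full]
    [(restrictFunctor F PC PD fun X _ => hFD X).Faithful]
    (ω : ∀ X, G.obj (F.obj X) ⟶ X) (hω : ∀ X, ω X = e (F.obj X) (hFD X) X (𝟙 (F.obj X)))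
    {c : A} (hc : PC c) : IsIso (ω c) := by
  have : (ObjectProperty.ι PC).map ((partialAdjunction hFD hGC e hnat).counit.app ⟨c, hc⟩) =
      ω c := by
    rw [hω]
    rfl
  rw [← this]
  exact Functor.map_isIso _ _

end PartialAdjunction

section CompatibleSquare

variable {A' A B' B : Type*} [Category.{v₁} A'] [Category.{v₂} A] [Category.{v₃} B']
  [Category.{v₄} B] {Pstar : A' ⥤ A} {Plow : A ⥤ A'} (adjP : Pstar ⊣ Plow)
  {Qstar : B' ⥤ B} {Qlow : B ⥤ B'} (adjQ : Qstar ⊣ Qlow)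
  {F : A ⥤ B} {F' : A' ⥤ B'} (α : Pstar ⋙ F ≅ F' ⋙ Qstar) (β : Plow ⋙ F' ≅ F ⋙ Qlow)

/-- The isomorphism `Ω_F = Q* Ω_{F*} ∘ Ω_F* P_*` of the paper. -/
def comonadIso : Plow ⋙ Pstar ⋙ F ≅ F ⋙ Qlow ⋙ Qstar :=
  Functor.isoWhiskerLeft Plow α ≪≫ Functor.isoWhiskerRight β Qstar

@[simp]
theorem comonadIso_hom_app (X : A) :
    (comonadIso α β).hom.app X = α.hom.app (Plow.obj X) ≫ Qstar.map (β.hom.app X) :=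
  rfl

theorem map_map_unit_comp_comonadIso_hom_app
    (hii : ∀ X, F'.map (adjP.unit.app X) ≫ β.hom.app (Pstar.obj X) ≫ Qlow.map (α.hom.app X) =
      adjQ.unit.app (F'.obj X)) (X : A') :
    F.map (Pstar.map (adjP.unit.app X)) ≫ (comonadIso α β).hom.app (Pstar.obj X) =
      α.hom.app X ≫ Qstar.map (adjQ.unit.app (F'.obj X) ≫ Qlow.map (α.inv.app X)) := by
  have h := α.hom.naturality_assoc (adjP.unit.app X) (Qstar.map (β.hom.app (Pstar.obj X)))
  simp only [Functor.comp_map, Functor.comp_obj, Functor.id_obj] at h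
  rw [comonadIso_hom_app, h, ← Qstar.map_comp, ← hii]
  simp

theorem map_map_unit_comp_map_map_eq_of_comp_hom_app
    (hii : ∀ X, F'.map (adjP.unit.app X) ≫ β.hom.app (Pstar.obj X) ≫ Qlow.map (α.hom.app X) =
      adjQ.unit.app (F'.obj X)) {X Y : A'}
    {a : Pstar.obj X ⟶ Pstar.obj Y} {ψ : F'.obj X ⟶ F'.obj Y}
    (ha : F.map a ≫ α.hom.app Y = α.hom.app X ≫ Qstar.map ψ) :
    F.map (Pstar.map (adjP.unit.app X) ≫ Pstar.map (Plow.map a)) =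
      F.map (a ≫ Pstar.map (adjP.unit.app Y)) := by
  rw [F.map_comp, F.map_comp, ← cancel_mono ((comonadIso α β).hom.app (Pstar.obj Y))]
  simp only [Category.assoc]
  have ha' : α.inv.app X ≫ F.map a = Qstar.map ψ ≫ α.inv.app Y := by
    simp [← cancel_mono (α.hom.app Y), ha]
  have hψ := adjQ.unit.naturality ψ
  simp only [Functor.id_map, Functor.comp_map] at hψ
  calc F.map (Pstar.map (adjP.unit.app X)) ≫ F.map (Pstar.map (Plow.map a)) ≫
        (comonadIso α β).hom.app (Pstar.obj Y)
      = F.map (Pstar.map (adjP.unit.app X)) ≫ (comonadIso α β).hom.app (Pstar.obj X) ≫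
          Qstar.map (Qlow.map (F.map a)) := by
        simpa using congrArg (F.map (Pstar.map (adjP.unit.app X)) ≫ ·)
          ((comonadIso α β).hom.naturality a)
    _ = α.hom.app X ≫ Qstar.map ψ ≫
          Qstar.map (adjQ.unit.app (F'.obj Y) ≫ Qlow.map (α.inv.app Y)) := by
        rw [← Category.assoc, map_map_unit_comp_comonadIso_hom_app adjP adjQ α β hii,
          Category.assoc, ← Qstar.map_comp, ← Qstar.map_comp, Category.assoc, ← Qlow.map_comp, ha',
          Qlow.map_comp, reassoc_of% hψ]
    _ = F.map a ≫ F.map (Pstar.map (adjP.unit.app Y)) ≫ (comonadIso α β).hom.app (Pstar.obj Y) := by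
        rw [map_map_unit_comp_comonadIso_hom_app adjP adjQ α β hii, reassoc_of% ha]

theorem map_injective_of_map_injective (α : Pstar ⋙ F ≅ F' ⋙ Qstar)
    [∀ X, IsSplitMono (adjP.unit.app X)] {X Y : A'}
    (hF : Function.Injective (F.map : (Pstar.obj X ⟶ Pstar.obj Y) → _)) :
    Function.Injective (F'.map : (X ⟶ Y) → _) := by
  have := adjP.faithful_L_of_mono_unit_app
  intro f g hfg
  apply Pstar.map_injective
  apply hF
  have hf := NatIso.naturality_2 α f
  have hg := NatIso.naturality_2 α g
  simp only [Functor.comp_map, hfg] at hf hg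
  exact hf.symm.trans hg

theorem map_surjective_of_map_surjective [∀ X, IsSplitMono (adjP.unit.app X)]
    [∀ Y, IsSplitMono (adjQ.unit.app Y)]
    (hii : ∀ X, F'.map (adjP.unit.app X) ≫ β.hom.app (Pstar.obj X) ≫ Qlow.map (α.hom.app X) =
      adjQ.unit.app (F'.obj X)) {X Y : A'}
    (hF : Function.Surjective (F.map : (Pstar.obj X ⟶ Pstar.obj Y) → _)) :
    Function.Surjective (F'.map : (X ⟶ Y) → _) := by
  have := adjQ.faithful_L_of_mono_unit_app
  intro ψ
  obtain ⟨a, ha⟩ := hF (α.hom.app X ≫ Qstar.map ψ ≫ α.inv.app Y)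
  obtain ⟨f, hf⟩ := adjP.exists_map_map_eq_of_map_comp F
    (map_map_unit_comp_map_map_eq_of_comp_hom_app adjP adjQ α β hii (a := a) (ψ := ψ)
      (by simp [ha]))
  refine ⟨f, Qstar.map_injective ?_⟩
  have hα := NatIso.naturality_1 α f
  simp only [Functor.comp_map, hf, ha] at hα
  simpa using hα.symm

end CompatibleSquare

section CompatibleSquares

variable {A' A B' B : Type*} [Category.{v₁} A'] [Category.{v₂} A] [Category.{v₃} B']
  [Category.{v₄} B] {Pstar : A' ⥤ A} {Plow : A ⥤ A'} (adjP : Pstar ⊣ Plow)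
  {Qstar : B' ⥤ B} {Qlow : B ⥤ B'} (adjQ : Qstar ⊣ Qlow)
  {F : A ⥤ B} {G : B ⥤ A} {F' : A' ⥤ B'} {G' : B' ⥤ A'}
  (ΩFs : Pstar ⋙ F ≅ F' ⋙ Qstar) (ΩFl : Plow ⋙ F' ≅ F ⋙ Qlow)
  (ΩGs : Qstar ⋙ G ≅ G' ⋙ Pstar) (ΩGl : Qlow ⋙ G' ≅ G ⋙ Plow)

theorem nonempty_iso_of_comp_map_unit [∀ X, IsSplitMono (adjP.unit.app X)]
    (hiiF : ∀ X, F'.map (adjP.unit.app X) ≫ ΩFl.hom.app (Pstar.obj X) ≫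
      Qlow.map (ΩFs.hom.app X) = adjQ.unit.app (F'.obj X))
    (hiiG : ∀ Y, G'.map (adjQ.unit.app Y) ≫ ΩGl.hom.app (Qstar.obj Y) ≫
      Plow.map (ΩGs.hom.app Y) = adjP.unit.app (G'.obj Y))
    {X : A'} (c : G.obj (F.obj (Pstar.obj X)) ⟶ Pstar.obj X) [IsIso c]
    (hc : G.map (F.map (Pstar.map (adjP.unit.app X))) ≫
        G.map ((comonadIso ΩFs ΩFl).hom.app (Pstar.obj X)) ≫
        (comonadIso ΩGs ΩGl).hom.app (F.obj (Pstar.obj X)) ≫ Pstar.map (Plow.map c) =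
      c ≫ Pstar.map (adjP.unit.app X)) :
    Nonempty (G'.obj (F'.obj X) ≅ X) := by
  set b := ΩGs.inv.app (F'.obj X) ≫ G.map (ΩFs.inv.app X) ≫ c with hb
  have hF := map_map_unit_comp_comonadIso_hom_app adjP adjQ ΩFs ΩFl hiiF X
  have hG := map_map_unit_comp_comonadIso_hom_app adjQ adjP ΩGs ΩGl hiiG (F'.obj X)
  have hnat := (comonadIso ΩGs ΩGl).hom.naturality (ΩFs.inv.app X)
  simp only [Functor.comp_map] at hnat
  have hGF : G.map (ΩFs.inv.app X) ≫ G.map (F.map (Pstar.map (adjP.unit.app X))) ≫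
        G.map ((comonadIso ΩFs ΩFl).hom.app (Pstar.obj X)) =
      G.map (Qstar.map (adjQ.unit.app (F'.obj X))) ≫
        G.map (Qstar.map (Qlow.map (ΩFs.inv.app X))) := by
    rw [← G.map_comp, ← G.map_comp, hF]
    simp
  obtain ⟨w, hw⟩ := adjP.exists_map_eq_of_comp (a := b) <| by
    calc Pstar.map (adjP.unit.app (G'.obj (F'.obj X))) ≫ Pstar.map (Plow.map b)
        = ΩGs.inv.app (F'.obj X) ≫ G.map (Qstar.map (adjQ.unit.app (F'.obj X))) ≫
            G.map (Qstar.map (Qlow.map (ΩFs.inv.app X))) ≫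
            (comonadIso ΩGs ΩGl).hom.app (F.obj (Pstar.obj X)) ≫ Pstar.map (Plow.map c) := by
          rw [reassoc_of% hnat, reassoc_of% hG]
          simp [hb]
      _ = b ≫ Pstar.map (adjP.unit.app X) := by
          rw [hb, Category.assoc, Category.assoc, ← hc, reassoc_of% hGF]
  have := adjP.reflectsIsomorphisms_of_isSplitMono_unit
  have : IsIso (Pstar.map w) := by rw [hw]; infer_instance
  have := isIso_of_reflects_iso w Pstar
  exact ⟨asIso w⟩

end CompatibleSquares

theorem main_lemma_general
    {A' A B' B : Type*} [Category A'] [Category A] [Category B'] [Category B]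
    (Pstar : A' ⥤ A) (Plow : A ⥤ A') (adjP : Pstar ⊣ Plow)
    (Qstar : B' ⥤ B) (Qlow : B ⥤ B') (adjQ : Qstar ⊣ Qlow)
    (F : A ⥤ B) (G : B ⥤ A) (F' : A' ⥤ B') (G' : B' ⥤ A')
    (PC : A → Prop) (PD : B → Prop) (PC' : A' → Prop) (PD' : B' → Prop)
    (hFD : ∀ a : A, PD (F.obj a))
    (hGC : ∀ b : B, PD b → PC (G.obj b))
    (hPC : ∀ x : A', PC' x → PC (Pstar.obj x))
    (hF' : ∀ x : A', PC' x → PD' (F'.obj x))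
    (hG' : ∀ y : B', PD' y → PC' (G'.obj y))
    (ΩFs : Pstar ⋙ F ≅ F' ⋙ Qstar) (ΩFl : Plow ⋙ F' ≅ F ⋙ Qlow)
    (ΩGs : Qstar ⋙ G ≅ G' ⋙ Pstar) (ΩGl : Qlow ⋙ G' ≅ G ⋙ Plow)
    (hiiF : ∀ X : A',
      F'.map (adjP.unit.app X) ≫ ΩFl.hom.app (Pstar.obj X) ≫ Qlow.map (ΩFs.hom.app X)
        = adjQ.unit.app (F'.obj X))
    (hiiG : ∀ Y : B',
      G'.map (adjQ.unit.app Y) ≫ ΩGl.hom.app (Qstar.obj Y) ≫ Plow.map (ΩGs.hom.app Y)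
        = adjP.unit.app (G'.obj Y))
    (hsplitP : ∀ X : A', ∃ ζ : Plow.obj (Pstar.obj X) ⟶ X, adjP.unit.app X ≫ ζ = 𝟙 X)
    (hsplitQ : ∀ Y : B', ∃ ζ : Qlow.obj (Qstar.obj Y) ⟶ Y, adjQ.unit.app Y ≫ ζ = 𝟙 Y)
    (e : ∀ (D : B), PD D → ∀ (X : A), (D ⟶ F.obj X) ≃ (G.obj D ⟶ X))
    (hnat : ∀ (D D' : B) (hD : PD D) (hD' : PD D') (g : D' ⟶ D)
      (X X' : A) (a : X ⟶ X') (φ : D ⟶ F.obj X),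
      e D' hD' X' (g ≫ φ ≫ F.map a) = G.map g ≫ e D hD X φ ≫ a)
    (ω : ∀ X : A, G.obj (F.obj X) ⟶ X)
    (hω : ∀ X : A, ω X = e (F.obj X) (hFD X) X (𝟙 (F.obj X))) :
    (((restrictFunctor F PC PD fun a ha => hFD a).Full ∧
        (restrictFunctor F PC PD fun a ha => hFD a).Faithful) →
      (restrictFunctor F' PC' PD' hF').Full ∧ (restrictFunctor F' PC' PD' hF').Faithful) ∧
    ((((restrictFunctor F PC PD fun a ha => hFD a).Full ∧
        (restrictFunctor F PC PD fun a ha => hFD a).Faithful) ∧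
      ((restrictFunctor G' PD' PC' hG').Full ∧ (restrictFunctor G' PD' PC' hG').Faithful) ∧
      (∀ X : A', PC' X →
        G.map (F.map (Pstar.map (adjP.unit.app X))) ≫
            G.map (ΩFs.hom.app (Plow.obj (Pstar.obj X)) ≫
              Qstar.map (ΩFl.hom.app (Pstar.obj X))) ≫
            (ΩGs.hom.app (Qlow.obj (F.obj (Pstar.obj X))) ≫
              Pstar.map (ΩGl.hom.app (F.obj (Pstar.obj X)))) ≫
            Pstar.map (Plow.map (ω (Pstar.obj X)))
          = ω (Pstar.obj X) ≫ Pstar.map (adjP.unit.app X))) →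
      (restrictFunctor F' PC' PD' hF').IsEquivalence) := by
  have hsplitP' : ∀ X, IsSplitMono (adjP.unit.app X) := fun X =>
    (hsplitP X).elim fun ζ hζ => IsSplitMono.mk' ⟨ζ, hζ⟩
  have hsplitQ' : ∀ Y, IsSplitMono (adjQ.unit.app Y) := fun Y =>
    (hsplitQ Y).elim fun ζ hζ => IsSplitMono.mk' ⟨ζ, hζ⟩
  have fullyFaithful_F' : ((restrictFunctor F PC PD fun a _ => hFD a).Full ∧
      (restrictFunctor F PC PD fun a _ => hFD a).Faithful) →
      (restrictFunctor F' PC' PD' hF').Full ∧ (restrictFunctor F' PC' PD' hF').Faithful := by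
    simp only [restrictFunctor_full_and_faithful_iff]
    intro hF X Y hX hY
    have hPF := hF _ _ (hPC X hX) (hPC Y hY)
    exact ⟨map_injective_of_map_injective adjP ΩFs hPF.1,
      map_surjective_of_map_surjective adjP adjQ ΩFs ΩFl hiiF hPF.2⟩
  refine ⟨fullyFaithful_F', fun ⟨hF, ⟨_, _⟩, hstar⟩ => ?_⟩
  obtain ⟨_, _⟩ := fullyFaithful_F' hF
  obtain ⟨_, _⟩ := hF
  refine { essSurj := ⟨fun Y => ?_⟩ }
  have hX := hG' _ Y.property
  have := isIso_counit_app_of_full_of_faithful hFD hGC e hnat ω hω (hPC _ hX)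
  obtain ⟨i⟩ :=
    nonempty_iso_of_comp_map_unit adjP adjQ ΩFs ΩFl ΩGs ΩGl hiiF hiiG _ (hstar _ hX)
  exact ⟨⟨_, hX⟩, ⟨(Functor.FullyFaithful.ofFullyFaithful (restrictFunctor G' PD' PC' hG')
    ).preimageIso (ObjectProperty.isoMk _ i)⟩⟩

/-- Lemma 2.12 ("main lemma"): given compatible adjunctions `(P* ⊣ P_*)`, `(Q* ⊣ Q_*)`,
functors `F, G, F′, G′` and full subcategories as in the statement, with split-mono units
and a partial adjunction `Σ(D, A) : Hom(D, F(A)) ≅ Hom(G(D), A)` natural in `D ∈ 𝒟`,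
`A ∈ 𝒜` with counit `ω`:
(1) if `F|_𝒞` is fully faithful then so is `F′|_𝒞′`;
(2) if moreover `F|_𝒞` and `G′|_𝒟′` are fully faithful and the diagram `(⋆)` commutes,
then `F′|_𝒞′` is an equivalence. -/
theorem main_lemma
    {A' A B' B : Type*} [Category A'] [Category A] [Category B'] [Category B]
    (Pstar : A' ⥤ A) (Plow : A ⥤ A') (adjP : Pstar ⊣ Plow)
    (Qstar : B' ⥤ B) (Qlow : B ⥤ B') (adjQ : Qstar ⊣ Qlow)
    (F : A ⥤ B) (G : B ⥤ A) (F' : A' ⥤ B') (G' : B' ⥤ A')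
    (PC : A → Prop) (PD : B → Prop) (PC' : A' → Prop) (PD' : B' → Prop)
    (hFD : ∀ a : A, PD (F.obj a))
    (hGC : ∀ b : B, PD b → PC (G.obj b))
    (hPC : ∀ x : A', PC' x → PC (Pstar.obj x))
    (hQD : ∀ y : B', PD' y → PD (Qstar.obj y))
    (hF' : ∀ x : A', PC' x → PD' (F'.obj x))
    (hG' : ∀ y : B', PD' y → PC' (G'.obj y))
    (ΩFs : Pstar ⋙ F ≅ F' ⋙ Qstar) (ΩFl : Plow ⋙ F' ≅ F ⋙ Qlow)
    (ΩGs : Qstar ⋙ G ≅ G' ⋙ Pstar) (ΩGl : Qlow ⋙ G' ≅ G ⋙ Plow)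
    (hiF : ∀ X : A,
      ΩFs.hom.app (Plow.obj X) ≫ Qstar.map (ΩFl.hom.app X) ≫ adjQ.counit.app (F.obj X)
        = F.map (adjP.counit.app X))
    (hiiF : ∀ X : A',
      F'.map (adjP.unit.app X) ≫ ΩFl.hom.app (Pstar.obj X) ≫ Qlow.map (ΩFs.hom.app X)
        = adjQ.unit.app (F'.obj X))
    (hiG : ∀ Y : B,
      ΩGs.hom.app (Qlow.obj Y) ≫ Pstar.map (ΩGl.hom.app Y) ≫ adjP.counit.app (G.obj Y)
        = G.map (adjQ.counit.app Y))
    (hiiG : ∀ Y : B',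
      G'.map (adjQ.unit.app Y) ≫ ΩGl.hom.app (Qstar.obj Y) ≫ Plow.map (ΩGs.hom.app Y)
        = adjP.unit.app (G'.obj Y))
    (hsplitP : ∀ X : A', ∃ ζ : Plow.obj (Pstar.obj X) ⟶ X, adjP.unit.app X ≫ ζ = 𝟙 X)
    (hsplitQ : ∀ Y : B', ∃ ζ : Qlow.obj (Qstar.obj Y) ⟶ Y, adjQ.unit.app Y ≫ ζ = 𝟙 Y)
    (e : ∀ (D : B), PD D → ∀ (X : A), (D ⟶ F.obj X) ≃ (G.obj D ⟶ X))
    (hnat : ∀ (D D' : B) (hD : PD D) (hD' : PD D') (g : D' ⟶ D)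
      (X X' : A) (a : X ⟶ X') (φ : D ⟶ F.obj X),
      e D' hD' X' (g ≫ φ ≫ F.map a) = G.map g ≫ e D hD X φ ≫ a)
    (ω : ∀ X : A, G.obj (F.obj X) ⟶ X)
    (hω : ∀ X : A, ω X = e (F.obj X) (hFD X) X (𝟙 (F.obj X))) :
    (((restrictFunctor F PC PD fun a ha => hFD a).Full ∧
        (restrictFunctor F PC PD fun a ha => hFD a).Faithful) →
      (restrictFunctor F' PC' PD' hF').Full ∧ (restrictFunctor F' PC' PD' hF').Faithful) ∧
    ((((restrictFunctor F PC PD fun a ha => hFD a).Full ∧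
        (restrictFunctor F PC PD fun a ha => hFD a).Faithful) ∧
      ((restrictFunctor G' PD' PC' hG').Full ∧ (restrictFunctor G' PD' PC' hG').Faithful) ∧
      (∀ X : A', PC' X →
        G.map (F.map (Pstar.map (adjP.unit.app X))) ≫
            G.map (ΩFs.hom.app (Plow.obj (Pstar.obj X)) ≫
              Qstar.map (ΩFl.hom.app (Pstar.obj X))) ≫
            (ΩGs.hom.app (Qlow.obj (F.obj (Pstar.obj X))) ≫
              Pstar.map (ΩGl.hom.app (F.obj (Pstar.obj X)))) ≫
            Pstar.map (Plow.map (ω (Pstar.obj X)))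
          = ω (Pstar.obj X) ≫ Pstar.map (adjP.unit.app X))) →
      (restrictFunctor F' PC' PD' hF').IsEquivalence) :=
  main_lemma_general Pstar Plow adjP Qstar Qlow adjQ F G F' G' PC PD PC' PD' hFD hGC hPC hF' hG' ΩFs
    ΩFl ΩGs ΩGl hiiF hiiG hsplitP hsplitQ e hnat ω hω
end

section
/- Let F₁: 𝒜₁ → 𝒜₂, F₂: 𝒜₂ → 𝒜₃, G₁: 𝒜₂ → 𝒜₁, G₂: 𝒜₃ → 𝒜₂ be functors with adjunctions (G₁ ⊣ F₁) and (G₂ ⊣ F₂) with counits ω₁: G₁F₁ → id and ω₂: G₂F₂ → id, and for i = 1, 2, 3 let Pᵢ*: 𝒜ᵢ′ → 𝒜ᵢ and P_{i*}: 𝒜ᵢ → 𝒜ᵢ′ be functors with adjunctions (Pᵢ* ⊣ P_{i*}) with units ηᵢ: id → P_{i*}Pᵢ*; set Tᵢ := Pᵢ*P_{i*}. Suppose given natural isomorphisms Ω_{Fᵢ}: FᵢTᵢ ≅ T_{i+1}Fᵢ and Ω_{Gᵢ}: GᵢT_{i+1} ≅ TᵢGᵢ for i = 1, 2. Set F :=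 F₂∘F₁, G := G₁∘G₂, let ω: GF → id be the composite ω₁ ∘ G₁ω₂F₁, and set Ω_F := Ω_{F₂}F₁ ∘ F₂Ω_{F₁}: FT₁ ≅ T₃F and Ω_G := Ω_{G₁}G₂ ∘ G₁Ω_{G₂}: GT₃ ≅ T₁G. Assume: (a) for each i = 1, 2 the diagram (⋄)ᵢ commutes, i.e. Pᵢ*P_{i*}ωᵢPᵢ* ∘ Ω_{Gᵢ}FᵢPᵢ* ∘ GᵢΩ_{Fᵢ}Pᵢ* ∘ GᵢFᵢPᵢ*ηᵢ = Pᵢ*ηᵢ ∘ ωᵢPᵢ* as natural transformations GᵢFᵢPᵢ* → Pᵢ*P_{i*}Pᵢ*; and (b) there exist a functor F₁′: 𝒜₁′ → 𝒜₂′ and natural isomorphisms μ: F₁′P_{1*}P₁* ≅ P_{2*}P₂*F₁′ and ν: F₁P₁* ≅ P₂*F₁′ such that P₂*P_{2*}ν ∘ Ω_{F₁}P₁* = P₂*μ ∘ νP_{1*}P₁* and μ ∘ F₁′η₁ = η₂F₁′. Then the diagram (⋄) commutes, i.e. P₁*P_{1*}ωP₁* ∘ Ω_G F P₁* ∘ GΩ_F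 P₁* ∘ GFP₁*η₁ = P₁*η₁ ∘ ωP₁* as natural transformations GFP₁* → P₁*P_{1*}P₁*. -/
open CategoryTheory

/-- Lemma ("decomposition"): given adjunctions `(G₁ ⊣ F₁)`, `(G₂ ⊣ F₂)` and
`(Pᵢ* ⊣ P_{i*})` for `i = 1, 2, 3`, linearization-type isomorphisms `Ω_{Fᵢ}`, `Ω_{Gᵢ}`,
if the diagrams `(⋄)₁` and `(⋄)₂` commute and there exist `F₁′`, `μ`, `ν` satisfying the
compatibilities `(†)` and `(††)`, then the diagram `(⋄)` for the composites
`F = F₂∘F₁`, `G = G₁∘G₂` commutes. -/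
theorem decomposition_lemma
    {A1 A2 A3 A1' A2' A3' : Type*}
    [Category A1] [Category A2] [Category A3]
    [Category A1'] [Category A2'] [Category A3']
    (F1 : A1 ⥤ A2) (F2 : A2 ⥤ A3) (G1 : A2 ⥤ A1) (G2 : A3 ⥤ A2)
    (adj1 : G1 ⊣ F1) (adj2 : G2 ⊣ F2)
    (P1s : A1' ⥤ A1) (P1l : A1 ⥤ A1') (adjP1 : P1s ⊣ P1l)
    (P2s : A2' ⥤ A2) (P2l : A2 ⥤ A2') (adjP2 : P2s ⊣ P2l)
    (P3s : A3' ⥤ A3) (P3l : A3 ⥤ A3') (adjP3 : P3s ⊣ P3l)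
    (ΩF1 : (P1l ⋙ P1s) ⋙ F1 ≅ F1 ⋙ (P2l ⋙ P2s))
    (ΩF2 : (P2l ⋙ P2s) ⋙ F2 ≅ F2 ⋙ (P3l ⋙ P3s))
    (ΩG1 : (P2l ⋙ P2s) ⋙ G1 ≅ G1 ⋙ (P1l ⋙ P1s))
    (ΩG2 : (P3l ⋙ P3s) ⋙ G2 ≅ G2 ⋙ (P2l ⋙ P2s))
    -- the diagram (⋄)₁
    (hdia1 : ∀ X : A1',
      G1.map (F1.map (P1s.map (adjP1.unit.app X))) ≫
          G1.map (ΩF1.hom.app (P1s.obj X)) ≫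
          ΩG1.hom.app (F1.obj (P1s.obj X)) ≫
          P1s.map (P1l.map (adj1.counit.app (P1s.obj X)))
        = adj1.counit.app (P1s.obj X) ≫ P1s.map (adjP1.unit.app X))
    -- the diagram (⋄)₂
    (hdia2 : ∀ X : A2',
      G2.map (F2.map (P2s.map (adjP2.unit.app X))) ≫
          G2.map (ΩF2.hom.app (P2s.obj X)) ≫
          ΩG2.hom.app (F2.obj (P2s.obj X)) ≫
          P2s.map (P2l.map (adj2.counit.app (P2s.obj X)))
        = adj2.counit.app (P2s.obj X) ≫ P2s.map (adjP2.unit.app X))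
    -- the data of (b)
    (F1' : A1' ⥤ A2')
    (μ : (P1s ⋙ P1l) ⋙ F1' ≅ F1' ⋙ (P2s ⋙ P2l))
    (ν : P1s ⋙ F1 ≅ F1' ⋙ P2s)
    -- the compatibility (†)
    (hdagger : ∀ X : A1',
      ΩF1.hom.app (P1s.obj X) ≫ P2s.map (P2l.map (ν.hom.app X))
        = ν.hom.app (P1l.obj (P1s.obj X)) ≫ P2s.map (μ.hom.app X))
    -- the compatibility (††)
    (hddagger : ∀ X : A1',
      F1'.map (adjP1.unit.app X) ≫ μ.hom.app X = adjP2.unit.app (F1'.obj X)) :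
    -- the diagram (⋄) for the composites
    ∀ X : A1',
      G1.map (G2.map (F2.map (F1.map (P1s.map (adjP1.unit.app X))))) ≫
          G1.map (G2.map (F2.map (ΩF1.hom.app (P1s.obj X)) ≫
            ΩF2.hom.app (F1.obj (P1s.obj X)))) ≫
          (G1.map (ΩG2.hom.app (F2.obj (F1.obj (P1s.obj X)))) ≫
            ΩG1.hom.app (G2.obj (F2.obj (F1.obj (P1s.obj X))))) ≫
          P1s.map (P1l.map
            (G1.map (adj2.counit.app (F1.obj (P1s.obj X))) ≫ adj1.counit.app (P1s.obj X)))
        = (G1.map (adj2.counit.app (F1.obj (P1s.obj X))) ≫ adj1.counit.app (P1s.obj X)) ≫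
            P1s.map (adjP1.unit.app X) := by
  intro X
  -- Step 1: claim A  :  F1(P1s η₁) ≫ ΩF1 = ν ≫ P2s η₂ ≫ P2s P2l ν⁻¹
  have hΩ : ΩF1.hom.app (P1s.obj X)
      = ν.hom.app (P1l.obj (P1s.obj X)) ≫ P2s.map (μ.hom.app X) ≫
          P2s.map (P2l.map (ν.inv.app X)) := by
    have h2 : (ΩF1.hom.app (P1s.obj X) ≫ P2s.map (P2l.map (ν.hom.app X))) ≫
          P2s.map (P2l.map (ν.inv.app X))
        = (ν.hom.app (P1l.obj (P1s.obj X)) ≫ P2s.map (μ.hom.app X)) ≫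
          P2s.map (P2l.map (ν.inv.app X)) := by
      rw [hdagger X]
    simpa [← Functor.map_comp] using h2
  have claimA : F1.map (P1s.map (adjP1.unit.app X)) ≫ ΩF1.hom.app (P1s.obj X)
      = ν.hom.app X ≫ P2s.map (adjP2.unit.app (F1'.obj X)) ≫
          P2s.map (P2l.map (ν.inv.app X)) := by
    have hν := ν.hom.naturality (adjP1.unit.app X)
    dsimp at hν
    rw [hΩ, ← Category.assoc, hν, Category.assoc, ← Category.assoc (P2s.map _),
      ← P2s.map_comp, hddagger X]
  -- Step 2: push through ΩF2 (naturality at ν⁻¹)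
  have n1 := ΩF2.hom.naturality (ν.inv.app X)
  dsimp at n1
  have keyA3 : F2.map (F1.map (P1s.map (adjP1.unit.app X))) ≫
        F2.map (ΩF1.hom.app (P1s.obj X)) ≫ ΩF2.hom.app (F1.obj (P1s.obj X))
      = F2.map (ν.hom.app X) ≫ F2.map (P2s.map (adjP2.unit.app (F1'.obj X))) ≫
          ΩF2.hom.app (P2s.obj (F1'.obj X)) ≫
          P3s.map (P3l.map (F2.map (ν.inv.app X))) := by
    rw [← Category.assoc, ← F2.map_comp, claimA]
    simp only [Functor.map_comp, Category.assoc, n1]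
  -- Step 3: the key identity in A2, using (⋄)₂ at F₁′X
  have n2 := ΩG2.hom.naturality (F2.map (ν.inv.app X))
  dsimp at n2
  have n4 := adj2.counit.naturality (ν.inv.app X)
  dsimp at n4
  have n5 := adj2.counit.naturality (ν.hom.app X)
  dsimp at n5
  have hd2 := hdia2 (F1'.obj X)
  have keyA2 : G2.map (F2.map (F1.map (P1s.map (adjP1.unit.app X)))) ≫
        G2.map (F2.map (ΩF1.hom.app (P1s.obj X))) ≫
        G2.map (ΩF2.hom.app (F1.obj (P1s.obj X))) ≫
        ΩG2.hom.app (F2.obj (F1.obj (P1s.obj X))) ≫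
        P2s.map (P2l.map (adj2.counit.app (F1.obj (P1s.obj X))))
      = adj2.counit.app (F1.obj (P1s.obj X)) ≫
          F1.map (P1s.map (adjP1.unit.app X)) ≫ ΩF1.hom.app (P1s.obj X) := by
    have keyA3G : G2.map (F2.map (F1.map (P1s.map (adjP1.unit.app X)))) ≫
          G2.map (F2.map (ΩF1.hom.app (P1s.obj X))) ≫
          G2.map (ΩF2.hom.app (F1.obj (P1s.obj X)))
        = G2.map (F2.map (ν.hom.app X)) ≫
          G2.map (F2.map (P2s.map (adjP2.unit.app (F1'.obj X)))) ≫
          G2.map (ΩF2.hom.app (P2s.obj (F1'.obj X))) ≫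
          G2.map (P3s.map (P3l.map (F2.map (ν.inv.app X)))) := by
      rw [← G2.map_comp, ← G2.map_comp, keyA3]
      simp only [Functor.map_comp, Category.assoc]
    rw [reassoc_of% keyA3G]
    rw [reassoc_of% n2]
    rw [show P2s.map (P2l.map (G2.map (F2.map (ν.inv.app X)))) ≫
          P2s.map (P2l.map (adj2.counit.app (F1.obj (P1s.obj X))))
        = P2s.map (P2l.map (adj2.counit.app (P2s.obj (F1'.obj X)))) ≫
          P2s.map (P2l.map (ν.inv.app X)) from by
      rw [← P2s.map_comp, ← P2l.map_comp, n4, P2l.map_comp, P2s.map_comp]]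
    rw [reassoc_of% hd2, reassoc_of% n5, ← claimA]
  -- Step 4: conclude with naturality of ΩG1 and (⋄)₁
  have n3 := ΩG1.hom.naturality (adj2.counit.app (F1.obj (P1s.obj X)))
  dsimp at n3
  simp only [Functor.map_comp, Category.assoc]
  rw [← reassoc_of% n3]
  have keyA2G : G1.map (G2.map (F2.map (F1.map (P1s.map (adjP1.unit.app X))))) ≫
        G1.map (G2.map (F2.map (ΩF1.hom.app (P1s.obj X)))) ≫
        G1.map (G2.map (ΩF2.hom.app (F1.obj (P1s.obj X)))) ≫
        G1.map (ΩG2.hom.app (F2.obj (F1.obj (P1s.obj X)))) ≫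
        G1.map (P2s.map (P2l.map (adj2.counit.app (F1.obj (P1s.obj X)))))
      = G1.map (adj2.counit.app (F1.obj (P1s.obj X))) ≫
        G1.map (F1.map (P1s.map (adjP1.unit.app X))) ≫
        G1.map (ΩF1.hom.app (P1s.obj X)) := by
    rw [← G1.map_comp, ← G1.map_comp, ← G1.map_comp, ← G1.map_comp, keyA2]
    simp only [Functor.map_comp, Category.assoc]
  rw [reassoc_of% keyA2G]
  rw [hdia1 X]
end
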